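/- (Theorem 3, feasibility part.) Under the path setup of Theorem 3 — index sets A_0, …, A_K each with G_{A_l} of full row rank, consecutive sets differing by adding or removing one constraint j_l, and update quantities c_l ∈ ℝ, v_l ∈ ℝⁿ, f_l ∈ ℝ^m, d̃_l ∈ ℝ^{n_c} (with d̃_l taken as in Theorem 1 for an addition and as its negative for a removal) — the following identities hold for every θ ∈ ℝⁿ: (i) G z_{A_K}(θ) − b − Sθ = (G z_{A_0}(θ) − b − Sθ) + Σ_{l=1}^{K} (G f_l)(c_l + v_lᵀθ) in ℝ^{n_c}, and (ii) λ̃_{A_K}(θ) = λ̃_{A_0}(θ) − Σ_{l=1}^{K} d̃_l (c_l + v_lᵀθ) in ℝ^{n_c}. Consequently, θ satisfies G z_{A_K}(θ) ≤ b + Sθ and λ_{A_K}(θ) ≥ 0 if and only if, for every k ∉ A_K, the k-th component of (G z_{A_0}(θ) − b − Sθ) + Σ_l (G f_l)(c_l + v_lᵀθ) is ≤ 0, and for every k ∈ A_K, the k-th component of −λ̃_{A_0}(θ) + Σ_l d̃_l (c_l + v_lᵀθ) is ≤ 0. -/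

import Mathlib

/-!
Each step of the path is Theorem 1. If `j` joins `A`, the vector
`μ = λ̃_A − (c_j + v_jᵀθ) d̃_j` vanishes off `A ∪ {j}` and satisfies `(P μ)_i = −(b + Sθ)_i`
on `A ∪ {j}`, where `P = G H⁻¹ Gᵀ`; since `W_{A ∪ {j}}` is positive definite, these equations
characterise `λ̃_{A ∪ {j}}`. The Schur complement `C` is `d̃_jᵀ P d̃_j > 0`, which makes the
division in `c_j, v_j` legitimate. A removal is an addition read backwards.
Because `G z_A = −P λ̃_A` and `G f_j = P d̃_j`, both identities telescope along the path.
Feasibility only has to be checked off `A_K` for the primal and on `A_K` for the dual,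
as the primal constraints are tight on `A_K` and `λ̃_{A_K}` vanishes off it.
-/

open Matrix

noncomputable section
namespace MpQP

/-- Submatrix of the rows of `G` indexed by the finite index set `A`. -/
def subRows {nc p : ℕ} (G : Matrix (Fin nc) (Fin p) ℝ) (A : Finset (Fin nc)) :
    Matrix A (Fin p) ℝ := Matrix.of fun i k => G i.val k

/-- Subvector of `b` indexed by `A`. -/
def subVec {nc : ℕ} (b : Fin nc → ℝ) (A : Finset (Fin nc)) : A → ℝ := fun i => b i.val

/-- `G_A` has full row rank, i.e. the rows of `G` indexed by `A` are linearly independent. -/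
def FullRowRank {nc m : ℕ} (G : Matrix (Fin nc) (Fin m) ℝ) (A : Finset (Fin nc)) : Prop :=
  LinearIndependent ℝ (fun i : A => G i.val)

/-- The parametric dual solution `λ_A(θ) = −(G_A H⁻¹ G_Aᵀ)⁻¹ (b_A + S_A θ)`. -/
def lamOf {m n nc : ℕ} (H : Matrix (Fin m) (Fin m) ℝ) (G : Matrix (Fin nc) (Fin m) ℝ)
    (b : Fin nc → ℝ) (S : Matrix (Fin nc) (Fin n) ℝ) (A : Finset (Fin nc))
    (θ : Fin n → ℝ) : A → ℝ :=
  -((subRows G A * H⁻¹ * (subRows G A)ᵀ)⁻¹.mulVec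
      (fun i => b i.val + S.mulVec θ i.val))

/-- The parametric primal solution `z_A(θ) = −H⁻¹ G_Aᵀ λ_A(θ)`. -/
def zOf {m n nc : ℕ} (H : Matrix (Fin m) (Fin m) ℝ) (G : Matrix (Fin nc) (Fin m) ℝ)
    (b : Fin nc → ℝ) (S : Matrix (Fin nc) (Fin n) ℝ) (A : Finset (Fin nc))
    (θ : Fin n → ℝ) : Fin m → ℝ :=
  -((H⁻¹ * (subRows G A)ᵀ).mulVec (lamOf H G b S A θ))

/-- `λ̃_A(θ) ∈ ℝ^{n_c}`: the dual solution extended by zeros outside `A`. -/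
def lamExt {m n nc : ℕ} (H : Matrix (Fin m) (Fin m) ℝ) (G : Matrix (Fin nc) (Fin m) ℝ)
    (b : Fin nc → ℝ) (S : Matrix (Fin nc) (Fin n) ℝ) (A : Finset (Fin nc))
    (θ : Fin n → ℝ) : Fin nc → ℝ :=
  fun k => if h : k ∈ A then lamOf H G b S A θ ⟨k, h⟩ else 0

/-- `W = G_A H⁻¹ G_Aᵀ`. -/
def Wmat {m nc : ℕ} (H : Matrix (Fin m) (Fin m) ℝ) (G : Matrix (Fin nc) (Fin m) ℝ)
    (A : Finset (Fin nc)) : Matrix A A ℝ :=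
  subRows G A * H⁻¹ * (subRows G A)ᵀ

/-- `w = G_A H⁻¹ G_jᵀ`. -/
def wvec {m nc : ℕ} (H : Matrix (Fin m) (Fin m) ℝ) (G : Matrix (Fin nc) (Fin m) ℝ)
    (A : Finset (Fin nc)) (j : Fin nc) : A → ℝ :=
  (subRows G A * H⁻¹).mulVec (G j)

/-- `w₀ = G_j H⁻¹ G_jᵀ`. -/
def w0 {m nc : ℕ} (H : Matrix (Fin m) (Fin m) ℝ) (G : Matrix (Fin nc) (Fin m) ℝ)
    (j : Fin nc) : ℝ :=
  G j ⬝ᵥ H⁻¹.mulVec (G j)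

/-- The Schur complement `C = w₀ − wᵀ W⁻¹ w`. -/
def Cval {m nc : ℕ} (H : Matrix (Fin m) (Fin m) ℝ) (G : Matrix (Fin nc) (Fin m) ℝ)
    (A : Finset (Fin nc)) (j : Fin nc) : ℝ :=
  w0 H G j - wvec H G A j ⬝ᵥ (Wmat H G A)⁻¹.mulVec (wvec H G A j)

/-- `c_j = C⁻¹ (wᵀ W⁻¹ b_A − b_j)`. -/
def cVal {m nc : ℕ} (H : Matrix (Fin m) (Fin m) ℝ) (G : Matrix (Fin nc) (Fin m) ℝ)
    (b : Fin nc → ℝ) (A : Finset (Fin nc)) (j : Fin nc) : ℝ :=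
  (Cval H G A j)⁻¹ * (wvec H G A j ⬝ᵥ (Wmat H G A)⁻¹.mulVec (subVec b A) - b j)

/-- `v_j = C⁻¹ (S_Aᵀ W⁻¹ w − S_jᵀ)`. -/
def vVec {m n nc : ℕ} (H : Matrix (Fin m) (Fin m) ℝ) (G : Matrix (Fin nc) (Fin m) ℝ)
    (S : Matrix (Fin nc) (Fin n) ℝ) (A : Finset (Fin nc)) (j : Fin nc) : Fin n → ℝ :=
  (Cval H G A j)⁻¹ •
    ((subRows S A)ᵀ.mulVec ((Wmat H G A)⁻¹.mulVec (wvec H G A j)) - S j)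

/-- `d̃_j ∈ ℝ^{n_c}`: equal to `W⁻¹ w` on `A`, to `−1` at index `j`, and `0` elsewhere. -/
def dExt {m nc : ℕ} (H : Matrix (Fin m) (Fin m) ℝ) (G : Matrix (Fin nc) (Fin m) ℝ)
    (A : Finset (Fin nc)) (j : Fin nc) : Fin nc → ℝ :=
  fun k =>
    if h : k ∈ A then (Wmat H G A)⁻¹.mulVec (wvec H G A j) ⟨k, h⟩
    else if k = j then -1 else 0

/-- `f_j = H⁻¹ G_{A ∪ {j}}ᵀ (d̃_j restricted to A ∪ {j})`. -/
def fVec {m nc : ℕ} (H : Matrix (Fin m) (Fin m) ℝ) (G : Matrix (Fin nc) (Fin m) ℝ)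
    (A : Finset (Fin nc)) (j : Fin nc) : Fin m → ℝ :=
  (H⁻¹ * (subRows G (insert j A))ᵀ).mulVec (fun i => dExt H G A j i.val)

theorem _root_.Fin.sum_succ_sub_castSucc {α : Type*} [AddCommGroup α] {K : ℕ}
    (g : Fin (K + 1) → α) :
    ∑ l : Fin K, (g l.succ - g l.castSucc) = g (Fin.last K) - g 0 := by
  induction K with
  | zero => simp
  | succ K ih =>
    rw [Fin.sum_univ_castSucc]
    simp only [Fin.succ_castSucc]
    rw [ih (fun k => g k.castSucc), Fin.succ_last, Fin.castSucc_zero]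
    abel

section ExtendZero

variable {ι R : Type*} [DecidableEq ι]

def extendZero [Zero R] (s : Finset ι) (x : s → R) : ι → R :=
  fun k => if h : k ∈ s then x ⟨k, h⟩ else 0

lemma extendZero_restrict [Zero R] {s : Finset ι} {x : ι → R} (hx : ∀ k ∉ s, x k = 0) :
    extendZero s (fun k : s => x k) = x := by
  funext k
  by_cases hk : k ∈ s <;> simp [extendZero, hk, hx]

variable [Fintype ι] [NonUnitalNonAssocSemiring R]

lemma dotProduct_extendZero (y : ι → R) (s : Finset ι) (x : s → R) :
    y ⬝ᵥ extendZero s x = (fun k : s => y k) ⬝ᵥ x := by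
  simp only [dotProduct, extendZero, mul_dite, mul_zero]
  exact (Finset.sum_attach_eq_sum_dite s fun k => y k * x k).symm

lemma mulVec_extendZero {α : Type*} (M : Matrix α ι R) (s : Finset ι) (x : s → R) :
    M *ᵥ extendZero s x = M.submatrix id (↑) *ᵥ x :=
  funext fun i => dotProduct_extendZero (M i) s x

end ExtendZero

def gram {m nc : ℕ} (H : Matrix (Fin m) (Fin m) ℝ) (G : Matrix (Fin nc) (Fin m) ℝ) :
    Matrix (Fin nc) (Fin nc) ℝ :=
  G * H⁻¹ * Gᵀ

variable {m n nc : ℕ} {H : Matrix (Fin m) (Fin m) ℝ} {G : Matrix (Fin nc) (Fin m) ℝ}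
  {b : Fin nc → ℝ} {S : Matrix (Fin nc) (Fin n) ℝ}

lemma gram_isSymm (hH : H.PosDef) : (gram H G).IsSymm := by
  have hHinv : (H⁻¹).IsSymm := isHermitian_iff_isSymm.1 hH.isHermitian.inv
  simp [gram, Matrix.IsSymm, Matrix.transpose_mul, hHinv.eq, Matrix.mul_assoc]

lemma wvec_eq (A : Finset (Fin nc)) (j : Fin nc) :
    wvec H G A j = fun i : A => gram H G i j := by
  funext i
  simp [wvec, gram, mulVec, Matrix.mul_apply, dotProduct, subRows, Finset.sum_mul]

lemma w0_eq (j : Fin nc) : w0 H G j = gram H G j j := by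
  simp only [w0, gram, mulVec, Matrix.mul_apply, dotProduct, Finset.mul_sum, Finset.sum_mul,
    transpose_apply]
  rw [Finset.sum_comm]
  simp only [mul_assoc]

lemma Wmat_mulVec (A : Finset (Fin nc)) (x : A → ℝ) (i : A) :
    (Wmat H G A *ᵥ x) i = (gram H G *ᵥ extendZero A x) i := by
  rw [mulVec_extendZero]; rfl

lemma FullRowRank.mono {A B : Finset (Fin nc)} (hB : FullRowRank G B) (hAB : A ⊆ B) :
    FullRowRank G A :=
  LinearIndepOn.mono (s := (B : Set (Fin nc))) hB (by simpa using hAB)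

lemma Wmat_posDef (hH : H.PosDef) {A : Finset (Fin nc)} (hA : FullRowRank G A) :
    (Wmat H G A).PosDef := by
  have := hH.inv.mul_mul_conjTranspose_same (B := subRows G A) (Matrix.vecMul_injective_iff.2 hA)
  rwa [conjTranspose_eq_transpose_of_trivial] at this

lemma Wmat_isUnit_det (hH : H.PosDef) {A : Finset (Fin nc)} (hA : FullRowRank G A) :
    IsUnit (Wmat H G A).det :=
  (Matrix.isUnit_iff_isUnit_det _).1 (Wmat_posDef hH hA).isUnit

lemma lamExt_eq_extendZero (A : Finset (Fin nc)) (θ : Fin n → ℝ) :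
    lamExt H G b S A θ = extendZero A (lamOf H G b S A θ) := rfl

lemma lamExt_of_notMem {A : Finset (Fin nc)} (θ : Fin n → ℝ) {k : Fin nc} (hk : k ∉ A) :
    lamExt H G b S A θ k = 0 := by
  simp [lamExt, hk]

lemma dExt_of_notMem_insert {A : Finset (Fin nc)} {j k : Fin nc} (hk : k ∉ insert j A) :
    dExt H G A j k = 0 := by
  simp_all [dExt]

lemma dExt_eq_extendZero_sub {A : Finset (Fin nc)} {j : Fin nc} (hj : j ∉ A) :
    dExt H G A j = extendZero A ((Wmat H G A)⁻¹ *ᵥ wvec H G A j) - Pi.single j 1 := by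
  funext k
  by_cases hk : k ∈ A
  · simp [dExt, extendZero, hk, ne_of_mem_of_not_mem hk hj]
  · by_cases hkj : k = j
    · subst hkj
      simp [dExt, extendZero, hj]
    · simp [dExt, extendZero, hk, hkj]

lemma mulVec_zOf (A : Finset (Fin nc)) (θ : Fin n → ℝ) :
    G *ᵥ zOf H G b S A θ = -(gram H G *ᵥ lamExt H G b S A θ) := by
  rw [zOf, lamExt_eq_extendZero, mulVec_extendZero, mulVec_neg, mulVec_mulVec, ← Matrix.mul_assoc]
  rfl

lemma mulVec_fVec (A : Finset (Fin nc)) (j : Fin nc) :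
    G *ᵥ fVec H G A j = gram H G *ᵥ dExt H G A j := by
  rw [fVec, mulVec_mulVec, ← Matrix.mul_assoc]
  change (gram H G).submatrix id (↑) *ᵥ
    (fun k : (insert j A : Finset (Fin nc)) => dExt H G A j k) = _
  rw [← mulVec_extendZero,
    extendZero_restrict (x := dExt H G A j) fun k hk => dExt_of_notMem_insert hk]

lemma gram_mulVec_extendZero_apply (hH : H.PosDef) (A : Finset (Fin nc)) (x : A → ℝ)
    (j : Fin nc) : (gram H G *ᵥ extendZero A x) j = wvec H G A j ⬝ᵥ x := by
  rw [mulVec_extendZero, wvec_eq]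
  simp only [mulVec, dotProduct, submatrix_apply, id, (gram_isSymm hH).apply]

lemma gram_mulVec_lamExt_of_mem (hH : H.PosDef) {A : Finset (Fin nc)} (hA : FullRowRank G A)
    (θ : Fin n → ℝ) {i : Fin nc} (hi : i ∈ A) :
    (gram H G *ᵥ lamExt H G b S A θ) i = -(b i + (S *ᵥ θ) i) := by
  rw [lamExt_eq_extendZero, ← Wmat_mulVec A _ ⟨i, hi⟩]
  change (Wmat H G A *ᵥ -((Wmat H G A)⁻¹ *ᵥ _)) _ = _
  rw [mulVec_neg, mulVec_mulVec, mul_nonsing_inv _ (Wmat_isUnit_det hH hA), one_mulVec]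
  rfl

lemma gram_mulVec_dExt_of_mem (hH : H.PosDef) {A : Finset (Fin nc)} (hA : FullRowRank G A)
    {i j : Fin nc} (hj : j ∉ A) (hi : i ∈ A) : (gram H G *ᵥ dExt H G A j) i = 0 := by
  rw [dExt_eq_extendZero_sub hj, mulVec_sub, mulVec_single_one, Pi.sub_apply,
    ← Wmat_mulVec A _ ⟨i, hi⟩, mulVec_mulVec, mul_nonsing_inv _ (Wmat_isUnit_det hH hA),
    one_mulVec, wvec_eq, col_apply, sub_self]

lemma gram_mulVec_dExt_self (hH : H.PosDef) {A : Finset (Fin nc)} {j : Fin nc} (hj : j ∉ A) :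
    (gram H G *ᵥ dExt H G A j) j = -Cval H G A j := by
  rw [dExt_eq_extendZero_sub hj, mulVec_sub, mulVec_single_one, Pi.sub_apply,
    gram_mulVec_extendZero_apply hH, Cval, w0_eq, col_apply]
  ring

lemma dotProduct_gram_mulVec_pos (hH : H.PosDef) {B : Finset (Fin nc)} (hB : FullRowRank G B)
    {μ : Fin nc → ℝ} (hsupp : ∀ k ∉ B, μ k = 0) (hμ : μ ≠ 0) :
    0 < μ ⬝ᵥ gram H G *ᵥ μ := by
  set ξ : B → ℝ := fun k => μ k
  have hext : extendZero B ξ = μ := extendZero_restrict hsupp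
  have hξ : ξ ≠ 0 := fun h => hμ (by rw [← hext, h]; funext k; simp [extendZero])
  have hW : Wmat H G B *ᵥ ξ = fun i : B => (gram H G *ᵥ μ) i :=
    funext fun i => by rw [Wmat_mulVec, hext]
  have hpos := (Wmat_posDef hH hB).dotProduct_mulVec_pos hξ
  rwa [star_trivial, hW, dotProduct_comm, ← dotProduct_extendZero, hext, dotProduct_comm] at hpos

lemma Cval_pos (hH : H.PosDef) {A : Finset (Fin nc)} {j : Fin nc} (hj : j ∉ A)
    (hB : FullRowRank G (insert j A)) : 0 < Cval H G A j := by
  have hA : FullRowRank G A := hB.mono (Finset.subset_insert j A)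
  set y := gram H G *ᵥ dExt H G A j
  have hyA : (fun k : A => y k) = 0 := funext fun k => gram_mulVec_dExt_of_mem hH hA hj k.2
  have hquad : dExt H G A j ⬝ᵥ y = Cval H G A j := by
    rw [dExt_eq_extendZero_sub hj, sub_dotProduct, single_one_dotProduct, dotProduct_comm,
      dotProduct_extendZero, hyA, zero_dotProduct, show y j = _ from gram_mulVec_dExt_self hH hj]
    ring
  have hd : dExt H G A j ≠ 0 := fun h => by simpa [dExt, hj] using congrFun h j
  exact hquad ▸ dotProduct_gram_mulVec_pos hH hB (fun k hk => dExt_of_notMem_insert hk) hd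

lemma dotProduct_Wmat_inv_mulVec_comm (hH : H.PosDef) (A : Finset (Fin nc)) (x y : A → ℝ) :
    ((Wmat H G A)⁻¹ *ᵥ x) ⬝ᵥ y = x ⬝ᵥ (Wmat H G A)⁻¹ *ᵥ y := by
  have hsymm : ((Wmat H G A)⁻¹)ᵀ = (Wmat H G A)⁻¹ := ((gram_isSymm hH).submatrix _).inv.eq
  rw [dotProduct_comm, dotProduct_mulVec, ← mulVec_transpose, hsymm, dotProduct_comm]

-- `c_j + v_jᵀθ` is exactly the multiplier for which the `j`-th equation
-- of `lamExt_eq_of_gram_mulVec` holds.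
lemma wvec_dotProduct_lamOf_add_Cval_mul (hH : H.PosDef) {A : Finset (Fin nc)} {j : Fin nc}
    (hC : Cval H G A j ≠ 0) (θ : Fin n → ℝ) :
    wvec H G A j ⬝ᵥ lamOf H G b S A θ + Cval H G A j * (cVal H G b A j + vVec H G S A j ⬝ᵥ θ) =
      -(b j + (S *ᵥ θ) j) := by
  set w := wvec H G A j
  set Winv := (Wmat H G A)⁻¹
  have hc : Cval H G A j * cVal H G b A j = w ⬝ᵥ Winv *ᵥ subVec b A - b j := by
    rw [cVal, mul_inv_cancel_left₀ hC]
  have hv : Cval H G A j * (vVec H G S A j ⬝ᵥ θ) =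
      w ⬝ᵥ Winv *ᵥ (subRows S A *ᵥ θ) - (S *ᵥ θ) j := by
    rw [vVec, smul_dotProduct, smul_eq_mul, mul_inv_cancel_left₀ hC, sub_dotProduct,
      mulVec_transpose, ← dotProduct_mulVec, dotProduct_Wmat_inv_mulVec_comm hH]
    rfl
  have hlam : w ⬝ᵥ lamOf H G b S A θ =
      -(w ⬝ᵥ Winv *ᵥ subVec b A + w ⬝ᵥ Winv *ᵥ (subRows S A *ᵥ θ)) := by
    change w ⬝ᵥ -(Winv *ᵥ (subVec b A + subRows S A *ᵥ θ)) = _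
    rw [mulVec_add, dotProduct_neg, dotProduct_add]
  rw [mul_add, hc, hv, hlam]
  ring

lemma lamExt_eq_of_gram_mulVec (hH : H.PosDef) {B : Finset (Fin nc)} (hB : FullRowRank G B)
    (θ : Fin n → ℝ) {μ : Fin nc → ℝ} (hsupp : ∀ k ∉ B, μ k = 0)
    (hμ : ∀ i ∈ B, (gram H G *ᵥ μ) i = -(b i + (S *ᵥ θ) i)) :
    lamExt H G b S B θ = μ := by
  have hW : Wmat H G B *ᵥ (fun k : B => μ k) = -(fun i : B => b i + (S *ᵥ θ) i) :=
    funext fun i => by rw [Wmat_mulVec, extendZero_restrict hsupp, hμ i i.2]; rfl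
  rw [lamExt_eq_extendZero, ← extendZero_restrict hsupp]
  congr 1
  change -((Wmat H G B)⁻¹ *ᵥ _) = _
  rw [← mulVec_neg, ← hW, mulVec_mulVec, nonsing_inv_mul _ (Wmat_isUnit_det hH hB), one_mulVec]

lemma lamExt_insert (hH : H.PosDef) {A : Finset (Fin nc)} {j : Fin nc} (hj : j ∉ A)
    (hB : FullRowRank G (insert j A)) (θ : Fin n → ℝ) :
    lamExt H G b S (insert j A) θ =
      lamExt H G b S A θ - (cVal H G b A j + vVec H G S A j ⬝ᵥ θ) • dExt H G A j := by
  have hA : FullRowRank G A := hB.mono (Finset.subset_insert j A)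
  apply lamExt_eq_of_gram_mulVec hH hB θ
  · intro k hk
    rw [Pi.sub_apply, Pi.smul_apply, lamExt_of_notMem θ fun h => hk (Finset.mem_insert_of_mem h),
      dExt_of_notMem_insert hk, smul_zero, sub_zero]
  · intro i hi
    rw [mulVec_sub, mulVec_smul, Pi.sub_apply, Pi.smul_apply, smul_eq_mul]
    rcases Finset.mem_insert.1 hi with rfl | hi
    · rw [gram_mulVec_dExt_self hH hj, lamExt_eq_extendZero, gram_mulVec_extendZero_apply hH,
        ← wvec_dotProduct_lamOf_add_Cval_mul hH (Cval_pos hH hj hB).ne' θ]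
      ring
    · rw [gram_mulVec_lamExt_of_mem hH hA θ hi, gram_mulVec_dExt_of_mem hH hA hj hi, mul_zero,
        sub_zero]

def IsPathStep (H : Matrix (Fin m) (Fin m) ℝ) (G : Matrix (Fin nc) (Fin m) ℝ) (b : Fin nc → ℝ)
    (S : Matrix (Fin nc) (Fin n) ℝ) (A A' : Finset (Fin nc)) (j : Fin nc) (c : ℝ)
    (v : Fin n → ℝ) (f : Fin m → ℝ) (d : Fin nc → ℝ) : Prop :=
  (j ∉ A ∧ A' = insert j A ∧ c = cVal H G b A j ∧ v = vVec H G S A j ∧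
      f = fVec H G A j ∧ d = dExt H G A j) ∨
    (j ∈ A ∧ A' = A.erase j ∧ c = cVal H G b A' j ∧ v = vVec H G S A' j ∧
      f = -fVec H G A' j ∧ d = -dExt H G A' j)

namespace IsPathStep

variable {A A' : Finset (Fin nc)} {j : Fin nc} {c : ℝ} {v : Fin n → ℝ} {f : Fin m → ℝ}
  {d : Fin nc → ℝ}

lemma lamExt_eq (hH : H.PosDef) (h : IsPathStep H G b S A A' j c v f d)
    (hA : FullRowRank G A) (hA' : FullRowRank G A') (θ : Fin n → ℝ) :
    lamExt H G b S A' θ = lamExt H G b S A θ - (c + v ⬝ᵥ θ) • d := by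
  rcases h with ⟨hj, rfl, rfl, rfl, -, rfl⟩ | ⟨hj, rfl, rfl, rfl, -, rfl⟩
  · exact lamExt_insert hH hj hA' θ
  · have hins : insert j (A.erase j) = A := Finset.insert_erase hj
    have hstep := lamExt_insert (b := b) (S := S) hH (Finset.notMem_erase j A) (hins ▸ hA) θ
    rw [hins] at hstep
    rw [hstep, smul_neg, sub_neg_eq_add, sub_add_cancel]

lemma mulVec_f (h : IsPathStep H G b S A A' j c v f d) : G *ᵥ f = gram H G *ᵥ d := by
  rcases h with ⟨-, -, -, -, rfl, rfl⟩ | ⟨-, -, -, -, rfl, rfl⟩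
  · exact mulVec_fVec A j
  · rw [mulVec_neg, mulVec_neg, mulVec_fVec]

end IsPathStep

lemma mulVec_zOf_of_mem (hH : H.PosDef) {A : Finset (Fin nc)} (hA : FullRowRank G A)
    (θ : Fin n → ℝ) {k : Fin nc} (hk : k ∈ A) :
    (G *ᵥ zOf H G b S A θ) k = b k + (S *ᵥ θ) k := by
  rw [mulVec_zOf, Pi.neg_apply, gram_mulVec_lamExt_of_mem hH hA θ hk, neg_neg]

lemma feasible_iff (hH : H.PosDef) {A : Finset (Fin nc)} (hA : FullRowRank G A)
    (θ : Fin n → ℝ) :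
    (G *ᵥ zOf H G b S A θ ≤ b + S *ᵥ θ ∧ ∀ i : A, 0 ≤ lamOf H G b S A θ i) ↔
      (∀ k ∉ A, (G *ᵥ zOf H G b S A θ - b - S *ᵥ θ) k ≤ 0) ∧
        ∀ k ∈ A, -lamExt H G b S A θ k ≤ 0 := by
  simp only [Pi.le_def, Pi.add_apply, Pi.sub_apply, sub_sub, sub_nonpos, neg_nonpos]
  constructor
  · rintro ⟨hz, hl⟩
    exact ⟨fun k _ => hz k, fun k hk => by simpa [lamExt, hk] using hl ⟨k, hk⟩⟩
  · rintro ⟨hz, hl⟩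
    refine ⟨fun k => ?_, fun i => by simpa [lamExt] using hl i i.2⟩
    by_cases hk : k ∈ A
    · exact (mulVec_zOf_of_mem hH hA θ hk).le
    · exact hz k hk

/-- Theorem 3, feasibility part: along a path `A_0, …, A_K` of active sets,
(i) the primal residual and (ii) the extended dual solution at `A_K` are given
by accumulated rank-one updates of those at `A_0`; consequently the feasibility
conditions `G z_{A_K}(θ) ≤ b + Sθ ∧ λ_{A_K}(θ) ≥ 0` hold iff the componentwise
inequalities built from the root data and the updates hold for `k ∉ A_K`
(primal) and `k ∈ A_K` (dual). -/
theorem feasibility_path_update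
    {m n nc : ℕ} (H : Matrix (Fin m) (Fin m) ℝ) (hH : H.PosDef)
    (G : Matrix (Fin nc) (Fin m) ℝ) (b : Fin nc → ℝ) (S : Matrix (Fin nc) (Fin n) ℝ)
    (K : ℕ) (A : Fin (K + 1) → Finset (Fin nc)) (j : Fin K → Fin nc)
    (c : Fin K → ℝ) (v : Fin K → Fin n → ℝ) (f : Fin K → Fin m → ℝ)
    (d : Fin K → Fin nc → ℝ)
    (hrank : ∀ l : Fin (K + 1), FullRowRank G (A l))
    (hstep : ∀ l : Fin K,
      (j l ∉ A l.castSucc ∧ A l.succ = insert (j l) (A l.castSucc) ∧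
        c l = cVal H G b (A l.castSucc) (j l) ∧
        v l = vVec H G S (A l.castSucc) (j l) ∧
        f l = fVec H G (A l.castSucc) (j l) ∧
        d l = dExt H G (A l.castSucc) (j l)) ∨
      (j l ∈ A l.castSucc ∧ A l.succ = (A l.castSucc).erase (j l) ∧
        c l = cVal H G b (A l.succ) (j l) ∧
        v l = vVec H G S (A l.succ) (j l) ∧
        f l = -fVec H G (A l.succ) (j l) ∧
        d l = -dExt H G (A l.succ) (j l))) :
    ∀ θ : Fin n → ℝ,
      (G.mulVec (zOf H G b S (A (Fin.last K)) θ) - b - S.mulVec θ =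
        (G.mulVec (zOf H G b S (A 0) θ) - b - S.mulVec θ) +
          ∑ l : Fin K, (c l + v l ⬝ᵥ θ) • G.mulVec (f l)) ∧
      (lamExt H G b S (A (Fin.last K)) θ =
        lamExt H G b S (A 0) θ - ∑ l : Fin K, (c l + v l ⬝ᵥ θ) • d l) ∧
      ((G.mulVec (zOf H G b S (A (Fin.last K)) θ) ≤ b + S.mulVec θ ∧
          ∀ i : (A (Fin.last K) : Finset (Fin nc)),
            0 ≤ lamOf H G b S (A (Fin.last K)) θ i) ↔
        ((∀ k, k ∉ A (Fin.last K) →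
            (G.mulVec (zOf H G b S (A 0) θ) - b - S.mulVec θ) k +
                ∑ l : Fin K, G.mulVec (f l) k * (c l + v l ⬝ᵥ θ) ≤ 0) ∧
          (∀ k ∈ A (Fin.last K),
            -(lamExt H G b S (A 0) θ k) +
                ∑ l : Fin K, d l k * (c l + v l ⬝ᵥ θ) ≤ 0))) := by
  intro θ
  have step : ∀ l, IsPathStep H G b S (A l.castSucc) (A l.succ) (j l) (c l) (v l) (f l) (d l) :=
    hstep
  have hlam : lamExt H G b S (A (Fin.last K)) θ =
      lamExt H G b S (A 0) θ - ∑ l : Fin K, (c l + v l ⬝ᵥ θ) • d l := by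
    have htel := Fin.sum_succ_sub_castSucc fun k => lamExt H G b S (A k) θ
    simp only [(step _).lamExt_eq hH (hrank _) (hrank _), sub_sub_cancel_left,
      Finset.sum_neg_distrib] at htel
    rw [sub_eq_add_neg, htel, add_sub_cancel]
  have hres : G *ᵥ zOf H G b S (A (Fin.last K)) θ - b - S *ᵥ θ =
      (G *ᵥ zOf H G b S (A 0) θ - b - S *ᵥ θ) +
        ∑ l : Fin K, (c l + v l ⬝ᵥ θ) • G *ᵥ f l := by
    simp only [mulVec_zOf, hlam, mulVec_sub, mulVec_sum, mulVec_smul, (step _).mulVec_f]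
    abel
  refine ⟨hres, hlam, ?_⟩
  rw [feasible_iff hH (hrank _), hres, hlam]
  simp only [Pi.add_apply, Pi.sub_apply, Finset.sum_apply, Pi.smul_apply, smul_eq_mul,
    neg_sub', sub_neg_eq_add, mul_comm]

end MpQP
end
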